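/- Let X ∈ ℝ^{n×p} and x₀ ∈ ℝ^p with ‖x₀‖ ≤ ε, and let X̃ ∈ ℝ^{(n+1)×p} be X with the row x₀ᵀ appended, so X̃ᵀX̃ = XᵀX + x₀x₀ᵀ. Then for every i, λᵢ(XᵀX) ≤ λᵢ(X̃ᵀX̃) ≤ λᵢ(XᵀX) + ε², where λᵢ(M) denotes the i-th largest eigenvalue. Consequently, for k ≤ min(n,p) with λ_k(XᵀX) > 0 and any symmetric positive semidefinite C_xx with largest eigenvalue λ₁(C_xx), the PCA-OLS variance trace on the poisoned data satisfies tr((X̃_{PCA,k}ᵀX̃_{PCA,k})^† C_xx) ≤ k λ₁(C_xx)/λ_k(XᵀX). -/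

import Mathlib

/- STATEMENT 14: Let X ∈ ℝ^{n×p}, x₀ ∈ ℝ^p with ‖x₀‖ ≤ ε, and X̃ be X with the row x₀ᵀ
appended, so X̃ᵀX̃ = XᵀX + x₀x₀ᵀ. Then λᵢ(XᵀX) ≤ λᵢ(X̃ᵀX̃) ≤ λᵢ(XᵀX) + ε² for every i.
Consequently, for k ≤ min(n,p) with λ_k(XᵀX) > 0 and any symmetric PSD C_xx with largest
eigenvalue λ₁(C_xx), the PCA-OLS variance trace on the poisoned data satisfies
tr((X̃_{PCA,k}ᵀX̃_{PCA,k})^† C_xx) ≤ k λ₁(C_xx)/λ_k(XᵀX). -/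

open Matrix
open scoped BigOperators

/-- `P` is the Moore–Penrose pseudoinverse of `A`. -/
def IsMoorePenrose {m n : Type*} [Fintype m] [Fintype n]
    (A : Matrix m n ℝ) (P : Matrix n m ℝ) : Prop :=
  A * P * A = A ∧ P * A * P = P ∧ (A * P)ᵀ = A * P ∧ (P * A)ᵀ = P * A

/-! Since `X̃ᵀX̃ = XᵀX + x₀x₀ᵀ` and `0 ≤ (x₀ ⬝ᵥ x)² ≤ ε² ‖x‖²`, the two quadratic forms differ by
at most `ε² ‖x‖²`, and the eigenvalue bounds follow from Courant–Fischer: a nonzero vector in the span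
of the first `i` eigenvectors of one matrix and the last `p - i + 1` of the other has its Rayleigh
quotient squeezed between the two `i`-th eigenvalues.

The Moore–Penrose inverse is unique, and for the truncated spectral sum `∑_{i<k} νᵢ w̃ᵢw̃ᵢᵀ` it is
`∑_{i<k} νᵢ⁻¹ w̃ᵢw̃ᵢᵀ`. Hence the trace equals `∑_{i<k} νᵢ⁻¹ w̃ᵢᵀ C w̃ᵢ`, and each term is at most
`λ₁(C) / μ_k` because `νᵢ ≥ μᵢ ≥ μ_k > 0`. -/

theorem IsMoorePenrose.unique {m n : Type*} [Fintype m] [Fintype n] {A : Matrix m n ℝ}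
    {P Q : Matrix n m ℝ} (hP : IsMoorePenrose A P) (hQ : IsMoorePenrose A Q) : P = Q := by
  obtain ⟨hAPA, hPAP, hAP, hPA⟩ := hP
  obtain ⟨hAQA, hQAQ, hAQ, hQA⟩ := hQ
  have hP_eq : P = P * A * Q := calc
    P = P * (A * P)ᵀ := by rw [hAP, ← Matrix.mul_assoc, hPAP]
    _ = P * (A * Q * (A * P))ᵀ := by rw [← Matrix.mul_assoc, hAQA]
    _ = P * (A * P)ᵀ * (A * Q)ᵀ := by rw [transpose_mul, Matrix.mul_assoc]
    _ = P * A * Q := by rw [hAP, hAQ, ← Matrix.mul_assoc, ← Matrix.mul_assoc P A P, hPAP]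
  have hQ_eq : Q = P * A * Q := calc
    Q = (Q * A)ᵀ * Q := by rw [hQA, hQAQ]
    _ = (Q * A * (P * A))ᵀ * Q := by
      rw [Matrix.mul_assoc Q A (P * A), ← Matrix.mul_assoc A P A, hAPA]
    _ = P * A * Q := by rw [transpose_mul, hPA, hQA, Matrix.mul_assoc (P * A), hQAQ]
  rw [hP_eq, ← hQ_eq]

namespace Matrix

theorem transpose_mul_self_of_snoc {n α : Type*} [CommSemiring α] {m : ℕ}
    (X : Matrix (Fin m) n α) (v : n → α) :
    (of (Fin.snoc (fun i : Fin m => fun j => X i j) v))ᵀ *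
        of (Fin.snoc (fun i : Fin m => fun j => X i j) v) = Xᵀ * X + vecMulVec v v := by
  ext s t
  simp [mul_apply, Fin.sum_univ_castSucc, vecMulVec_apply]

variable {ι n : Type*} [Fintype n]

/-- Orthonormality for `dotProduct`; Mathlib's `Orthonormal` needs an inner product space, and
`n → ℝ` carries the sup norm. -/
def DotOrthonormal [DecidableEq ι] (a : ι → n → ℝ) : Prop :=
  ∀ i j, a i ⬝ᵥ a j = if i = j then 1 else 0

theorem dotProduct_vecMulVec_self_mulVec (v x : n → ℝ) :
    x ⬝ᵥ (vecMulVec v v *ᵥ x) = (v ⬝ᵥ x) ^ 2 := by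
  rw [vecMulVec_mulVec, op_smul_eq_smul, dotProduct_smul, smul_eq_mul, dotProduct_comm, sq]

theorem dotProduct_sum_smul_vecMulVec_mulVec [Fintype ι] (c : ι → ℝ) (a : ι → n → ℝ)
    (x : n → ℝ) :
    x ⬝ᵥ ((∑ j, c j • vecMulVec (a j) (a j)) *ᵥ x) = ∑ j, c j * (a j ⬝ᵥ x) ^ 2 := by
  simp only [sum_mulVec, dotProduct_sum, smul_mulVec, dotProduct_smul, smul_eq_mul,
    dotProduct_vecMulVec_self_mulVec]

theorem sq_dotProduct_le (v x : n → ℝ) : (v ⬝ᵥ x) ^ 2 ≤ (v ⬝ᵥ v) * (x ⬝ᵥ x) := by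
  simpa only [dotProduct, ← sq] using Finset.sum_mul_sq_le_sq_mul_sq Finset.univ v x

theorem DotOrthonormal.sum_sq_dotProduct [DecidableEq n] {a : n → n → ℝ}
    (ha : DotOrthonormal a) (x : n → ℝ) : ∑ j, (a j ⬝ᵥ x) ^ 2 = x ⬝ᵥ x := by
  have hrows : of a * (of a)ᵀ = 1 := by
    ext i j
    simpa [mul_apply, one_apply, dotProduct] using ha i j
  have hcols : (of a)ᵀ * of a = 1 := mul_eq_one_comm.mp hrows
  calc ∑ j, (a j ⬝ᵥ x) ^ 2 = (of a *ᵥ x) ⬝ᵥ (of a *ᵥ x) := by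
        simp only [dotProduct, sq]; rfl
    _ = x ⬝ᵥ ((of a)ᵀ * of a) *ᵥ x := by
        rw [← mulVec_mulVec, dotProduct_mulVec x, vecMul_transpose]
    _ = x ⬝ᵥ x := by rw [hcols, one_mulVec]

theorem dotProduct_sum_smul_vecMulVec_mulVec_nonneg [Fintype ι] {c : ι → ℝ}
    (hc : ∀ j, 0 ≤ c j) (a : ι → n → ℝ) (x : n → ℝ) :
    0 ≤ x ⬝ᵥ ((∑ j, c j • vecMulVec (a j) (a j)) *ᵥ x) := by
  rw [dotProduct_sum_smul_vecMulVec_mulVec]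
  exact Finset.sum_nonneg fun j _ => mul_nonneg (hc j) (sq_nonneg _)

theorem DotOrthonormal.dotProduct_sum_smul_vecMulVec_mulVec_le [DecidableEq n]
    {a : n → n → ℝ} (ha : DotOrthonormal a) {c : n → ℝ} {M : ℝ} (hc : ∀ j, c j ≤ M)
    (x : n → ℝ) : x ⬝ᵥ ((∑ j, c j • vecMulVec (a j) (a j)) *ᵥ x) ≤ M * (x ⬝ᵥ x) := by
  rw [dotProduct_sum_smul_vecMulVec_mulVec, ← ha.sum_sq_dotProduct x, Finset.mul_sum]
  exact Finset.sum_le_sum fun j _ => mul_le_mul_of_nonneg_right (hc j) (sq_nonneg _)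

theorem exists_ne_zero_forall_dotProduct_eq_zero {K : Type*} [Field K] [Fintype ι]
    (v : ι → n → K) (h : Fintype.card ι < Fintype.card n) :
    ∃ x ≠ 0, ∀ l, v l ⬝ᵥ x = 0 := by
  have hker : LinearMap.ker (of v).mulVecLin ≠ ⊥ :=
    LinearMap.ker_ne_bot_of_finrank_lt (by simpa using h)
  obtain ⟨x, hx, hx0⟩ := Submodule.exists_mem_ne_zero_of_ne_bot hker
  exact ⟨x, hx0, fun l => congrFun (LinearMap.mem_ker.mp hx) l⟩

section Antitone

variable [Fintype ι] [LinearOrder ι] {c : ι → ℝ} {v : ι → ℝ} {i : ι}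

theorem mul_sum_sq_le_sum_mul_sq (hc : Antitone c) (hv : ∀ l, i < l → v l = 0) :
    c i * ∑ j, v j ^ 2 ≤ ∑ j, c j * v j ^ 2 := by
  rw [Finset.mul_sum]
  refine Finset.sum_le_sum fun j _ => ?_
  rcases le_or_gt j i with h | h
  · exact mul_le_mul_of_nonneg_right (hc h) (sq_nonneg _)
  · simp [hv j h]

theorem sum_mul_sq_le_mul_sum_sq (hc : Antitone c) (hv : ∀ l, l < i → v l = 0) :
    ∑ j, c j * v j ^ 2 ≤ c i * ∑ j, v j ^ 2 := by
  rw [Finset.mul_sum]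
  refine Finset.sum_le_sum fun j _ => ?_
  rcases le_or_gt i j with h | h
  · exact mul_le_mul_of_nonneg_right (hc h) (sq_nonneg _)
  · simp [hv j h]

end Antitone

theorem eigenvalue_le_add_of_forall_dotProduct_mulVec_le {p : ℕ} {A B : Matrix (Fin p) (Fin p) ℝ}
    {c d : Fin p → ℝ} {a b : Fin p → Fin p → ℝ} (hc : Antitone c) (ha : DotOrthonormal a)
    (hA : A = ∑ j, c j • vecMulVec (a j) (a j)) (hd : Antitone d) (hb : DotOrthonormal b)
    (hB : B = ∑ j, d j • vecMulVec (b j) (b j)) {δ : ℝ}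
    (hAB : ∀ x, x ⬝ᵥ (A *ᵥ x) ≤ x ⬝ᵥ (B *ᵥ x) + δ * (x ⬝ᵥ x)) (i : Fin p) :
    c i ≤ d i + δ := by
  -- p - 1 linear conditions leave a nonzero `x` whose Rayleigh quotient lies in `[c i, d i + δ]`.
  obtain ⟨x, hx0, hx⟩ := exists_ne_zero_forall_dotProduct_eq_zero
    (Sum.elim (fun l : Set.Ioi i => a l) (fun l : Set.Iio i => b l))
    (by simp only [Fintype.card_sum, Fintype.card_Ioi, Fintype.card_Iio, Fin.card_Ioi,
      Fin.card_Iio, Fintype.card_fin]; omega)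
  have hxx : 0 < x ⬝ᵥ x := by simpa using dotProduct_self_star_pos_iff.mpr hx0
  have hlower : c i * (x ⬝ᵥ x) ≤ x ⬝ᵥ (A *ᵥ x) := by
    rw [hA, dotProduct_sum_smul_vecMulVec_mulVec, ← ha.sum_sq_dotProduct x]
    exact mul_sum_sq_le_sum_mul_sq hc fun l hl => hx (.inl ⟨l, hl⟩)
  have hupper : x ⬝ᵥ (B *ᵥ x) ≤ d i * (x ⬝ᵥ x) := by
    rw [hB, dotProduct_sum_smul_vecMulVec_mulVec, ← hb.sum_sq_dotProduct x]
    exact sum_mul_sq_le_mul_sum_sq hd fun l hl => hx (.inr ⟨l, hl⟩)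
  exact le_of_mul_le_mul_right (by linarith [hAB x]) hxx

theorem interlacing_add_vecMulVec_self {p : ℕ} {A : Matrix (Fin p) (Fin p) ℝ} {v : Fin p → ℝ}
    {c d : Fin p → ℝ} {a b : Fin p → Fin p → ℝ} (hc : Antitone c) (ha : DotOrthonormal a)
    (hA : A = ∑ j, c j • vecMulVec (a j) (a j)) (hd : Antitone d) (hb : DotOrthonormal b)
    (hAv : A + vecMulVec v v = ∑ j, d j • vecMulVec (b j) (b j)) (i : Fin p) :
    c i ≤ d i ∧ d i ≤ c i + v ⬝ᵥ v := by
  have hquad (x : Fin p → ℝ) :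
      x ⬝ᵥ ((A + vecMulVec v v) *ᵥ x) = x ⬝ᵥ (A *ᵥ x) + (v ⬝ᵥ x) ^ 2 := by
    rw [add_mulVec, dotProduct_add, dotProduct_vecMulVec_self_mulVec]
  constructor
  · simpa using eigenvalue_le_add_of_forall_dotProduct_mulVec_le hc ha hA hd hb hAv (δ := 0)
      (fun x => by simp [hquad, sq_nonneg]) i
  · refine eigenvalue_le_add_of_forall_dotProduct_mulVec_le hd hb hAv hc ha hA (fun x => ?_) i
    rw [hquad]
    exact add_le_add_right (sq_dotProduct_le v x) _

theorem DotOrthonormal.sum_smul_vecMulVec_mul_sum_smul_vecMulVec [DecidableEq ι]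
    {a : ι → n → ℝ} (ha : DotOrthonormal a) (s : Finset ι) (c d : ι → ℝ) :
    (∑ i ∈ s, c i • vecMulVec (a i) (a i)) * (∑ j ∈ s, d j • vecMulVec (a j) (a j)) =
      ∑ i ∈ s, (c i * d i) • vecMulVec (a i) (a i) := by
  rw [Finset.sum_mul]
  refine Finset.sum_congr rfl fun i hi => ?_
  rw [Finset.mul_sum, Finset.sum_eq_single_of_mem i hi]
  · rw [smul_mul_smul_comm, vecMulVec_mul_vecMulVec, ha i i, if_pos rfl, one_smul]
  · intro j _ hji
    rw [smul_mul_smul_comm, vecMulVec_mul_vecMulVec, ha i j, if_neg hji.symm, zero_smul,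
      vecMulVec_zero, smul_zero]

theorem DotOrthonormal.isMoorePenrose_sum_smul_vecMulVec [DecidableEq ι] {a : ι → n → ℝ}
    (ha : DotOrthonormal a) (s : Finset ι) (c : ι → ℝ) :
    IsMoorePenrose (∑ i ∈ s, c i • vecMulVec (a i) (a i))
      (∑ i ∈ s, (c i)⁻¹ • vecMulVec (a i) (a i)) := by
  have hsymm : ∀ d : ι → ℝ, (∑ i ∈ s, d i • vecMulVec (a i) (a i))ᵀ =
      ∑ i ∈ s, d i • vecMulVec (a i) (a i) := fun d => by
    simp only [transpose_sum, transpose_smul, transpose_vecMulVec]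
  have hinv (x : ℝ) : x⁻¹ * x * x⁻¹ = x⁻¹ := by simpa using mul_inv_mul_cancel x⁻¹
  refine ⟨?_, ?_, ?_, ?_⟩ <;>
    simp only [ha.sum_smul_vecMulVec_mul_sum_smul_vecMulVec, mul_inv_mul_cancel, hinv, hsymm]

theorem trace_sum_smul_vecMulVec_mul {a : ι → n → ℝ} (s : Finset ι) (d : ι → ℝ)
    (C : Matrix n n ℝ) :
    trace ((∑ i ∈ s, d i • vecMulVec (a i) (a i)) * C) = ∑ i ∈ s, d i * (a i ⬝ᵥ (C *ᵥ a i)) := by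
  simp only [Finset.sum_mul, trace_sum, smul_mul, trace_smul, vecMulVec_mul, trace_vecMulVec,
    smul_eq_mul]
  exact Finset.sum_congr rfl fun i _ => by rw [dotProduct_comm, dotProduct_mulVec]

theorem DotOrthonormal.trace_sum_inv_smul_vecMulVec_mul_le [DecidableEq n] {a b : n → n → ℝ}
    (ha : DotOrthonormal a) (hb : DotOrthonormal b) {s : Finset n} {ν c : n → ℝ} {m L : ℝ}
    (hm : 0 < m) (hν : ∀ i ∈ s, m ≤ ν i) (hc0 : ∀ j, 0 ≤ c j) (hcL : ∀ j, c j ≤ L)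
    {C : Matrix n n ℝ} (hC : C = ∑ j, c j • vecMulVec (b j) (b j)) :
    trace ((∑ i ∈ s, (ν i)⁻¹ • vecMulVec (a i) (a i)) * C) ≤ s.card * L / m := by
  have hterm (i : n) (hi : i ∈ s) : (ν i)⁻¹ * (a i ⬝ᵥ (C *ᵥ a i)) ≤ m⁻¹ * L := by
    have hq_nonneg : 0 ≤ a i ⬝ᵥ (C *ᵥ a i) :=
      hC ▸ dotProduct_sum_smul_vecMulVec_mulVec_nonneg hc0 b (a i)
    have hq_le : a i ⬝ᵥ (C *ᵥ a i) ≤ L := calc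
      _ ≤ L * (a i ⬝ᵥ a i) := hC ▸ hb.dotProduct_sum_smul_vecMulVec_mulVec_le hcL (a i)
      _ = L := by simp [ha i i]
    have := hν i hi
    gcongr
  calc _ ≤ ∑ _i ∈ s, m⁻¹ * L := by
        rw [trace_sum_smul_vecMulVec_mul]
        exact Finset.sum_le_sum hterm
    _ = s.card * L / m := by rw [Finset.sum_const, nsmul_eq_mul]; field_simp

end Matrix

theorem poisoned_eigenvalue_interlacing_and_pca_robustness
    (n p k : ℕ) (hk0 : 0 < k) (hk : k ≤ min n p)
    (X : Matrix (Fin n) (Fin p) ℝ)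
    (x0 : Fin p → ℝ) (ε : ℝ) (hx0 : ∑ i, x0 i ^ 2 ≤ ε ^ 2)
    -- the poisoned data matrix: X with the row x₀ᵀ appended
    (Xt : Matrix (Fin (n + 1)) (Fin p) ℝ)
    (hXt : Xt = Matrix.of (Fin.snoc (fun i : Fin n => fun j => X i j) x0))
    -- eigendecomposition of XᵀX, eigenvalues sorted decreasingly
    (mu : Fin p → ℝ) (w : Fin p → Fin p → ℝ)
    (hmu_anti : ∀ i j : Fin p, i ≤ j → mu j ≤ mu i)
    (hw_orth : ∀ i j, w i ⬝ᵥ w j = if i = j then (1 : ℝ) else 0)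
    (hXX : Xᵀ * X = ∑ j, mu j • vecMulVec (w j) (w j))
    -- eigendecomposition of X̃ᵀX̃, eigenvalues sorted decreasingly
    (nu : Fin p → ℝ) (wt : Fin p → Fin p → ℝ)
    (hmut_anti : ∀ i j : Fin p, i ≤ j → nu j ≤ nu i)
    (hwt_orth : ∀ i j, wt i ⬝ᵥ wt j = if i = j then (1 : ℝ) else 0)
    (hXtXt : Xtᵀ * Xt = ∑ j, nu j • vecMulVec (wt j) (wt j))
    -- λ_k(XᵀX) > 0
    (hmuk : 0 < mu ⟨k - 1, by omega⟩)
    -- eigendecomposition of C_xx, symmetric PSD, eigenvalues sorted decreasingly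
    (Cxx : Matrix (Fin p) (Fin p) ℝ)
    (lam : Fin p → ℝ) (u : Fin p → Fin p → ℝ)
    (hlam_anti : ∀ i j : Fin p, i ≤ j → lam j ≤ lam i)
    (hlam_nonneg : ∀ j, 0 ≤ lam j)
    (hu_orth : ∀ i j, u i ⬝ᵥ u j = if i = j then (1 : ℝ) else 0)
    (hCdec : Cxx = ∑ j, lam j • vecMulVec (u j) (u j))
    -- the pseudoinverse of X̃_{PCA,k}ᵀ X̃_{PCA,k}
    (Bdag : Matrix (Fin p) (Fin p) ℝ)
    (hBdag : IsMoorePenrose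
      (∑ i ∈ Finset.univ.filter (fun i : Fin p => (i : ℕ) < k), nu i • vecMulVec (wt i) (wt i))
      Bdag) :
    (∀ i : Fin p, mu i ≤ nu i ∧ nu i ≤ mu i + ε ^ 2) ∧
      Matrix.trace (Bdag * Cxx) ≤ (k : ℝ) * lam ⟨0, by omega⟩ / mu ⟨k - 1, by omega⟩ := by
  have hinterlace (i : Fin p) : mu i ≤ nu i ∧ nu i ≤ mu i + ε ^ 2 := by
    have hx0_dot : x0 ⬝ᵥ x0 ≤ ε ^ 2 := by simpa only [dotProduct, sq] using hx0
    have hgram : Xtᵀ * Xt = Xᵀ * X + vecMulVec x0 x0 := hXt ▸ transpose_mul_self_of_snoc X x0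
    obtain ⟨hlower, hupper⟩ := interlacing_add_vecMulVec_self hmu_anti hw_orth hXX hmut_anti
      hwt_orth (hgram ▸ hXtXt) i
    exact ⟨hlower, hupper.trans (by gcongr)⟩
  refine ⟨hinterlace, ?_⟩
  have hnu_ge (i : Fin p) (hi : (i : ℕ) < k) : mu ⟨k - 1, by omega⟩ ≤ nu i :=
    (hmu_anti _ _ (show (i : ℕ) ≤ k - 1 by omega)).trans (hinterlace i).1
  rw [hBdag.unique (DotOrthonormal.isMoorePenrose_sum_smul_vecMulVec hwt_orth _ nu)]
  refine (DotOrthonormal.trace_sum_inv_smul_vecMulVec_mul_le hwt_orth hu_orth hmuk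
    (fun i hi => hnu_ge i (Finset.mem_filter.mp hi).2) hlam_nonneg
    (fun j => hlam_anti ⟨0, by omega⟩ j (Nat.zero_le _)) hCdec).trans_eq ?_
  rw [Fin.card_filter_val_lt, min_eq_right (by omega)]
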